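/- arXiv:1202.5502 — 4 statements merged into one kernel-verified Lean document; each statement's English description precedes it below -/
import Mathlib

section
/- Let X be a compact Hausdorff space, H a complex Hilbert space, and n a natural number. Let F : C(X, ℂ) → B(H) be a (not necessarily unital) star-algebra homomorphism such that for every f ∈ C(X, ℂ) the range of F(f) is contained in a subspace of H of dimension at most n. Then there exist k ≤ n, distinct points x₁, …, x_k ∈ X, and nonzero finite-rank orthogonal projections P₁, …, P_k on H with PᵢPⱼ = 0 for i ≠ j and rank P₁ + ⋯ + rank P_k ≤ n, such that F(f) = Σᵢ f(xᵢ) • Pᵢ for every f ∈ C(X, ℂ). -/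
/-!
The kernel of `F` is a closed ideal of `C(X, ℂ)`, so it consists of the functions vanishing on
the common zero set `K` of the kernel, and `F f` depends only on `f` restricted to `K`. For
distinct points `x₁, …, x_m` of `K`, real bump functions `Gᵢ` with `Gᵢ(xⱼ) = δᵢⱼ` and pairwise
disjoint supports are sent to nonzero operators with mutually orthogonal ranges inside the range
of `F 1`, which has dimension at most `n`; so `m ≤ n` and `K` is finite. Enumerating `K`, every
`f` agrees on `K` with `∑ f(xᵢ) Gᵢ`, and the `Pᵢ := F Gᵢ` are the required projections.
-/

open scoped CStarAlgebra

open Module in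
theorem iSupIndep.sum_finrank_le {K M ι : Type*} [DivisionRing K] [AddCommGroup M] [Module K M]
    [Fintype ι] {W : ι → Submodule K M} (hW : iSupIndep W) {V : Submodule K M}
    [FiniteDimensional K V] (hWV : ∀ i, W i ≤ V) :
    ∑ i, finrank K (W i) ≤ finrank K V := by
  classical
  have (i : ι) : FiniteDimensional K (W i) := Submodule.finiteDimensional_of_le (hWV i)
  rw [← finrank_directSum]
  change finrank K (Π₀ i, W i) ≤ _
  rw [← LinearMap.finrank_range_of_inj hW.dfinsupp_lsum_injective,
    ← Submodule.iSup_eq_range_dfinsupp_lsum]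
  exact Submodule.finrank_mono (iSup_le hWV)

theorem ContinuousLinearMap.range_isOrtho_of_adjoint_comp_eq_zero {𝕜 E F G : Type*} [RCLike 𝕜]
    [NormedAddCommGroup E] [InnerProductSpace 𝕜 E] [CompleteSpace E]
    [NormedAddCommGroup F] [InnerProductSpace 𝕜 F] [CompleteSpace F]
    [NormedAddCommGroup G] [InnerProductSpace 𝕜 G]
    {S : E →L[𝕜] F} {T : G →L[𝕜] F} (h : S.adjoint ∘L T = 0) :
    LinearMap.range (S : E →ₗ[𝕜] F) ⟂ LinearMap.range (T : G →ₗ[𝕜] F) := by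
  rw [Submodule.isOrtho_iff_inner_eq]
  rintro - ⟨a, rfl⟩ - ⟨b, rfl⟩
  rw [coe_coe, coe_coe, ← adjoint_inner_right, ← comp_apply, h, zero_apply, inner_zero_right]

theorem range_apply_le_range_apply_one {𝓕 R 𝕜 E : Type*} [MulOneClass R] [NormedField 𝕜]
    [SeminormedAddCommGroup E] [NormedSpace 𝕜 E] [FunLike 𝓕 R (E →L[𝕜] E)]
    [MulHomClass 𝓕 R (E →L[𝕜] E)] (F : 𝓕) (r : R) :
    LinearMap.range (F r : E →ₗ[𝕜] E) ≤ LinearMap.range (F 1 : E →ₗ[𝕜] E) := by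
  rw [← one_mul r, map_mul, ContinuousLinearMap.toLinearMap_mul]
  exact LinearMap.range_comp_le_range _ _

theorem exists_pairwise_orthogonal_bumps {X ι : Type*} [TopologicalSpace X] [T4Space X]
    [Finite ι] [DecidableEq ι] {x : ι → X} (hx : Function.Injective x) :
    ∃ G : ι → C(X, ℂ), (∀ i, IsSelfAdjoint (G i)) ∧
      (∀ i j, G i (x j) = if i = j then 1 else 0) ∧ Pairwise fun i j => G i * G j = 0 := by
  obtain ⟨U, hU, hUdisj⟩ := (Set.finite_range x).t2_separation
  have hdisj {i j : ι} (hij : i ≠ j) : Disjoint (U (x i)) (U (x j)) :=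
    hUdisj (Set.mem_range_self i) (Set.mem_range_self j) (hx.ne hij)
  have (i : ι) : ∃ g : C(X, ℝ), Set.EqOn g 0 (U (x i))ᶜ ∧ g (x i) = 1 := by
    obtain ⟨g, hg0, hg1, -⟩ := exists_continuous_zero_one_of_isClosed (hU (x i)).2.isClosed_compl
      isClosed_singleton (Set.disjoint_singleton_right.2 (not_not.2 (hU (x i)).1))
    exact ⟨g, hg0, hg1 rfl⟩
  choose g hg0 hg1 using this
  refine ⟨fun i => ⟨fun y => g i y, by fun_prop⟩, fun i => ?_, fun i j => ?_, fun i j hij => ?_⟩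
  · ext y
    exact Complex.conj_ofReal _
  · split_ifs with hij
    · simp [hij, hg1 j]
    · simp [hg0 i (Set.disjoint_right.1 (hdisj hij) (hU (x j)).1)]
  · ext y
    by_cases hy : y ∈ U (x i)
    · simp [hg0 j (Set.disjoint_left.1 (hdisj hij) hy)]
    · simp [hg0 i hy]

namespace NonUnitalStarAlgHom

variable {X : Type*} [TopologicalSpace X]

section CStarAlgebra

variable {A : Type*} [NonUnitalCStarAlgebra A] (F : C(X, ℂ) →⋆ₙₐ[ℂ] A)

def kerZeroLocus : Set X := {x | ∀ f, F f = 0 → f x = 0}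

theorem map_ne_zero_of_mem_kerZeroLocus {x : X} (hx : x ∈ kerZeroLocus F) {f : C(X, ℂ)}
    (hfx : f x ≠ 0) : F f ≠ 0 :=
  fun hf => hfx (hx f hf)

variable [CompactSpace X] [T2Space X]

theorem map_eq_zero_iff_eqOn_kerZeroLocus {f : C(X, ℂ)} :
    F f = 0 ↔ Set.EqOn f 0 (kerZeroLocus F) := by
  refine ⟨fun hf x hx => hx f hf, fun hf => ?_⟩
  have hker : IsClosed ((TwoSidedIdeal.ker F).asIdeal : Set C(X, ℂ)) :=
    isClosed_singleton.preimage (map_continuous F)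
  rw [← TwoSidedIdeal.mem_ker, ← TwoSidedIdeal.mem_asIdeal,
    ← ContinuousMap.idealOfSet_ofIdeal_isClosed hker, ContinuousMap.mem_idealOfSet]
  intro x hx
  exact hf fun g hg => ContinuousMap.notMem_setOfIdeal.1 hx ((TwoSidedIdeal.mem_ker F).2 hg)

theorem map_eq_map_of_eqOn_kerZeroLocus {f g : C(X, ℂ)} (h : Set.EqOn f g (kerZeroLocus F)) :
    F f = F g := by
  rw [← sub_eq_zero, ← map_sub, map_eq_zero_iff_eqOn_kerZeroLocus]
  intro x hx
  simp [h hx]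

end CStarAlgebra

section Operator

open Module

variable {H : Type*} [NormedAddCommGroup H] [InnerProductSpace ℂ H] [CompleteSpace H]
  (F : C(X, ℂ) →⋆ₙₐ[ℂ] (H →L[ℂ] H))

theorem range_map_isOrtho {a b : C(X, ℂ)} (ha : IsSelfAdjoint a) (hab : a * b = 0) :
    LinearMap.range (F a : H →ₗ[ℂ] H) ⟂ LinearMap.range (F b : H →ₗ[ℂ] H) := by
  refine ContinuousLinearMap.range_isOrtho_of_adjoint_comp_eq_zero ?_
  rw [← ContinuousLinearMap.star_eq_adjoint, ← map_star, ha.star_eq,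
    ← ContinuousLinearMap.mul_def, ← map_mul, hab, map_zero]

variable [FiniteDimensional ℂ (LinearMap.range (F 1 : H →ₗ[ℂ] H))]

theorem sum_finrank_range_map_le {ι : Type*} [Fintype ι] {G : ι → C(X, ℂ)}
    (hG : ∀ i, IsSelfAdjoint (G i)) (hGG : Pairwise fun i j => G i * G j = 0) :
    ∑ i, finrank ℂ (LinearMap.range (F (G i) : H →ₗ[ℂ] H)) ≤
      finrank ℂ (LinearMap.range (F 1 : H →ₗ[ℂ] H)) :=
  (OrthogonalFamily.of_pairwise fun _ _ hij => range_map_isOrtho F (hG _) (hGG hij)).independent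
    |>.sum_finrank_le fun i => range_apply_le_range_apply_one F (G i)

variable [CompactSpace X] [T2Space X]

theorem card_le_finrank_range_map_one {ι : Type*} [Fintype ι] {x : ι → X}
    (hx : Function.Injective x) (hxK : ∀ i, x i ∈ kerZeroLocus F) :
    Fintype.card ι ≤ finrank ℂ (LinearMap.range (F 1 : H →ₗ[ℂ] H)) := by
  classical
  obtain ⟨G, hG, hGx, hGG⟩ := exists_pairwise_orthogonal_bumps hx
  have hrank (i : ι) : 1 ≤ finrank ℂ (LinearMap.range (F (G i) : H →ₗ[ℂ] H)) := by
    have := Submodule.finiteDimensional_of_le (range_apply_le_range_apply_one F (G i))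
    refine Submodule.one_le_finrank_iff.2 (LinearMap.range_eq_bot.not.2 ?_)
    exact ContinuousLinearMap.coe_injective.ne
      (map_ne_zero_of_mem_kerZeroLocus F (hxK i) (f := G i) (by simp [hGx]))
  calc Fintype.card ι = ∑ _i : ι, 1 := by simp
    _ ≤ ∑ i, finrank ℂ (LinearMap.range (F (G i) : H →ₗ[ℂ] H)) :=
      Finset.sum_le_sum fun i _ => hrank i
    _ ≤ _ := sum_finrank_range_map_le F hG hGG

theorem kerZeroLocus_finite : (kerZeroLocus F).Finite := by
  by_contra hK
  obtain ⟨t, htK, ht⟩ :=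
    Set.Infinite.exists_subset_card_eq hK (finrank ℂ (LinearMap.range (F 1 : H →ₗ[ℂ] H)) + 1)
  have := card_le_finrank_range_map_one F (x := ((↑) : t → X)) Subtype.val_injective
    fun i => htK i.2
  simp [ht] at this

end Operator

end NonUnitalStarAlgHom

open Module NonUnitalStarAlgHom in
/-- A bounded-rank star-algebra homomorphism `F : C(X, ℂ) → B(H)` is a finite
configuration: there are `k ≤ n` distinct points of `X` labeled by nonzero, mutually orthogonal,
finite-rank orthogonal projections with total rank at most `n`, such that
`F f = ∑ i, f xᵢ • Pᵢ`. -/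
theorem stmt0
    {X : Type*} [TopologicalSpace X] [CompactSpace X] [T2Space X]
    {H : Type*} [NormedAddCommGroup H] [InnerProductSpace ℂ H] [CompleteSpace H]
    (n : ℕ)
    (F : C(X, ℂ) →⋆ₙₐ[ℂ] (H →L[ℂ] H))
    (hF : ∀ f : C(X, ℂ), ∃ V : Submodule ℂ H, FiniteDimensional ℂ V ∧
      Module.finrank ℂ V ≤ n ∧ LinearMap.range ((F f) : H →ₗ[ℂ] H) ≤ V) :
    ∃ k : ℕ, k ≤ n ∧ ∃ (x : Fin k → X) (P : Fin k → (H →L[ℂ] H)),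
      Function.Injective x ∧
      (∀ i, P i ≠ 0) ∧
      (∀ i, IsSelfAdjoint (P i)) ∧
      (∀ i, IsIdempotentElem (P i)) ∧
      (∀ i, FiniteDimensional ℂ (LinearMap.range ((P i) : H →ₗ[ℂ] H))) ∧
      (∀ i j, i ≠ j → P i * P j = 0) ∧
      (∑ i, Module.finrank ℂ (LinearMap.range ((P i) : H →ₗ[ℂ] H))) ≤ n ∧
      (∀ f : C(X, ℂ), F f = ∑ i, f (x i) • P i) := by
  obtain ⟨V, hV, hVn, hFV⟩ := hF 1
  have := Submodule.finiteDimensional_of_le hFV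
  have hrank := (Submodule.finrank_mono hFV).trans hVn
  obtain ⟨k, x, hx, hxK⟩ := (kerZeroLocus_finite F).fin_param
  obtain ⟨G, hG, hGx, hGG⟩ := exists_pairwise_orthogonal_bumps hx
  have hxK' (i : Fin k) : x i ∈ kerZeroLocus F := hxK ▸ Set.mem_range_self i
  have hk : k ≤ finrank ℂ (LinearMap.range (F 1 : H →ₗ[ℂ] H)) := by
    simpa using card_le_finrank_range_map_one F hx hxK'
  have hFeq {f g : C(X, ℂ)} (h : ∀ j, f (x j) = g (x j)) : F f = F g :=
    map_eq_map_of_eqOn_kerZeroLocus F (hxK ▸ Set.forall_mem_range.2 h)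
  refine ⟨k, hk.trans hrank, x, fun i => F (G i), hx,
    fun i => map_ne_zero_of_mem_kerZeroLocus F (hxK' i) (by simp [hGx]),
    fun i => (hG i).map F, fun i => ?_,
    fun i => Submodule.finiteDimensional_of_le (range_apply_le_range_apply_one F (G i)),
    fun i j hij => by rw [← map_mul, hGG hij, map_zero],
    (sum_finrank_range_map_le F hG hGG).trans hrank, fun f => ?_⟩
  · rw [IsIdempotentElem, ← map_mul]
    exact hFeq fun j => by simp [hGx]
  · simp_rw [← map_smul, ← map_sum]
    exact hFeq fun j => by simp [hGx]
end

section
/- Let G be a group acting on a compact Hausdorff space X by homeomorphisms and let u : G → U(H) be a unitary representation of G on a complex Hilbert space H. Suppose F : C(X, ℂ) → B(H) is given by F(f) = Σᵢ₌₁ᵏ f(xᵢ) • Pᵢ, where x₁, …, x_k ∈ X are distinct and P₁, …, P_k are nonzero finite-rank orthogonal projections with PᵢPⱼ = 0 for i ≠ j. Then for g ∈ G one has g·F = F (with (g·F)(f) = u(g) ∘ F(x ↦ f(g • x)) ∘ u(g)⁻¹) if and only if there exists a permutation σ of {1, …, k} such that x_{σ(i)} = g • xᵢ and P_{σ(i)}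 = u(g) Pᵢ u(g)⁻¹ for all i. -/
/-- Bump function: `1` at `a`, `0` on a finite set not containing `a`. -/
lemma exists_bump {X : Type*} [TopologicalSpace X] [CompactSpace X] [T2Space X]
    (S : Finset X) (a : X) (ha : a ∉ S) :
    ∃ f : C(X, ℂ), f a = 1 ∧ ∀ s ∈ S, f s = 0 := by
  obtain ⟨f, hf0, hf1, -⟩ := exists_continuous_zero_one_of_isClosed
    (S.finite_toSet.isClosed) (isClosed_singleton (x := a))
    (by simpa [Set.disjoint_singleton_right] using ha)
  refine ⟨(⟨Complex.ofReal, Complex.continuous_ofReal⟩ : C(ℝ, ℂ)).comp f, ?_, ?_⟩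
  · simp [hf1 (Set.mem_singleton a)]
  · intro s hs
    simp [hf0 hs]

/-- Let `F f = ∑ i, f (x i) • P i` be a configuration star-homomorphism with
distinct points `x i` and nonzero, pairwise orthogonal, finite-rank orthogonal projections `P i`.
Then `g·F = F` (where `(g·F)(f) = u g ∘ F (y ↦ f (g • y)) ∘ u g⁻¹`) if and only if there is a
permutation `σ` of the indices with `x (σ i) = g • x i` and `P (σ i) = u g ∘ P i ∘ u g⁻¹`. -/
theorem stmt2
    {G : Type*} [Group G]
    {X : Type*} [TopologicalSpace X] [CompactSpace X] [T2Space X]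
    [MulAction G X] [ContinuousConstSMul G X]
    {H : Type*} [NormedAddCommGroup H] [InnerProductSpace ℂ H] [CompleteSpace H]
    (u : G →* (H ≃ₗᵢ[ℂ] H))
    (k : ℕ) (x : Fin k → X) (P : Fin k → (H →L[ℂ] H))
    (hx : Function.Injective x)
    (hP0 : ∀ i, P i ≠ 0)
    (hPsa : ∀ i, IsSelfAdjoint (P i))
    (hPidem : ∀ i, IsIdempotentElem (P i))
    (hPfin : ∀ i, FiniteDimensional ℂ (LinearMap.range ((P i) : H →ₗ[ℂ] H)))
    (hPorth : ∀ i j, i ≠ j → P i * P j = 0)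
    (F : C(X, ℂ) →⋆ₙₐ[ℂ] (H →L[ℂ] H))
    (hF : ∀ f : C(X, ℂ), F f = ∑ i, f (x i) • P i)
    (g : G) :
    (∀ (f : C(X, ℂ)) (w : H),
        u g (F (f.comp ⟨fun y => g • y, continuous_const_smul g⟩) ((u g)⁻¹ w)) = F f w)
      ↔ ∃ σ : Equiv.Perm (Fin k),
          (∀ i, x (σ i) = g • x i) ∧
          (∀ i (w : H), P (σ i) w = u g (P i ((u g)⁻¹ w))) := by
  classical
  constructor
  · intro h
    -- key claim: for each `i` there is a (unique) `j` with `x j = g • x i` and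
    -- `P j = u g ∘ P i ∘ (u g)⁻¹`.
    have key : ∀ i, ∃ j, x j = g • x i ∧ ∀ w, P j w = u g (P i ((u g)⁻¹ w)) := by
      intro i
      -- the relevant finite set of points
      set T : Finset X :=
        (Finset.image x Finset.univ) ∪ (Finset.image (fun j => g • x j) Finset.univ) with hT
      have haT : g • x i ∈ T := by
        simp [hT]
      obtain ⟨f, hf1, hf0⟩ := exists_bump (T.erase (g • x i)) (g • x i)
        (Finset.notMem_erase _ _)
      have hf0' : ∀ y ∈ T, y ≠ g • x i → f y = 0 := fun y hy hne =>
        hf0 y (Finset.mem_erase.2 ⟨hne, hy⟩)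
      -- evaluate the hypothesis at the bump function
      have hev : ∀ w : H, u g (P i ((u g)⁻¹ w)) =
          ∑ j, f (x j) • P j w := by
        intro w
        have := h f w
        rw [hF, hF] at this
        simp only [ContinuousLinearMap.sum_apply, ContinuousLinearMap.smul_apply,
          ContinuousMap.comp_apply, ContinuousMap.coe_mk] at this
        rw [← this]
        congr 1
        rw [Finset.sum_eq_single_of_mem i (Finset.mem_univ i)]
        · rw [hf1, one_smul]
        · intro j _ hji
          have : f (g • x j) = 0 := by
            refine hf0' _ (by simp [hT]) fun hgx => hji (hx (smul_left_cancel g hgx))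
          rw [this, zero_smul]
      by_cases hex : ∃ j, x j = g • x i
      · obtain ⟨j, hj⟩ := hex
        refine ⟨j, hj, fun w => ?_⟩
        rw [hev w, Finset.sum_eq_single_of_mem j (Finset.mem_univ j)]
        · rw [hj, hf1, one_smul]
        · intro l _ hlj
          have : f (x l) = 0 := by
            refine hf0' _ (by simp [hT]) fun hxl => hlj (hx (hxl.trans hj.symm))
          rw [this, zero_smul]
      · exfalso
        push_neg at hex
        have hz : ∀ w : H, u g (P i ((u g)⁻¹ w)) = 0 := by
          intro w
          rw [hev w, Finset.sum_eq_zero]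
          intro j _
          rw [hf0' _ (by simp [hT]) (hex j), zero_smul]
        apply hP0 i
        ext v
        have := hz (u g v)
        rw [show ((u g)⁻¹ : H ≃ₗᵢ[ℂ] H) (u g v) = v by
          rw [LinearIsometryEquiv.coe_inv]; exact (u g).symm_apply_apply v] at this
        have : P i v = (u g).symm 0 := by
          rw [← (u g).symm_apply_apply (P i v), this]
        simpa using this
    choose j hj1 hj2 using key
    have hjinj : Function.Injective j := by
      intro a b hab
      have : g • x a = g • x b := by rw [← hj1 a, ← hj1 b, hab]
      exact hx (smul_left_cancel g this)
    refine ⟨Equiv.ofBijective j (Finite.injective_iff_bijective.mp hjinj), hj1, hj2⟩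
  · rintro ⟨σ, h1, h2⟩ f w
    rw [hF, hF]
    simp only [ContinuousLinearMap.sum_apply, ContinuousLinearMap.smul_apply,
      ContinuousMap.comp_apply, ContinuousMap.coe_mk, map_sum, LinearIsometryEquiv.map_smul]
    rw [← Equiv.sum_comp σ (fun l => f (x l) • P l w)]
    refine Finset.sum_congr rfl fun l _ => ?_
    rw [h1 l, h2 l w]
end

section
/- Let (A i)_{i ∈ I} be a family of (not necessarily unital) complex star algebras, H a complex Hilbert space, n a natural number, and let F : (Π i, A i) → B(H) be a (not necessarily unital) star-algebra homomorphism from the product star algebra (pointwise operations) such that for every a ∈ Π i, A i the range of F(a) is contained in a subspace of H of dimension at most n. Then the set of indices i ∈ I for which there exists a ∈ A i with F(single i a) ≠ 0 has at most n elements; here single i a denotes the element of the product that is a in coordinate i and 0 elsewhere. -/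
/-!
For `i ≠ j` the elements `single i x` and `single j y` multiply to zero, so the nonzero operators
`Tᵢ = F (single i cᵢ)`, `i ∈ t`, satisfy `Tᵢ* Tⱼ = Tᵢ Tⱼ* = 0`. Then `F (∑ single i cᵢ) (Tᵢ* w)`
equals `Tᵢ Tᵢ* w`, which is nonzero for a suitable `w` by the C⋆-identity, and these vectors are
pairwise orthogonal. So the range of a single value of `F` contains `|t|` orthogonal nonzero
vectors, and `|t| ≤ n`.
-/

open scoped InnerProductSpace

theorem Set.encard_le_coe_of_forall_finset_card_le {α : Type*} {s : Set α} {n : ℕ}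
    (h : ∀ t : Finset α, ↑t ⊆ s → t.card ≤ n) : s.encard ≤ n := by
  by_contra! hlt
  obtain ⟨t, hts, ht⟩ := Set.exists_subset_encard_eq (Order.add_one_le_of_lt hlt)
  obtain ⟨t, rfl⟩ := (Set.finite_of_encard_eq_coe (k := n + 1) (mod_cast ht)).exists_finset_coe
  have := h t hts
  simp only [Set.encard_coe_eq_coe_finsetCard] at ht
  norm_cast at ht
  omega

theorem Pi.single_mul_single_of_ne {I : Type*} [DecidableEq I] {A : I → Type*}
    [∀ i, MulZeroClass (A i)] {i j : I} (hij : i ≠ j) (x : A i) (y : A j) :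
    Pi.single i x * Pi.single j y = 0 := by
  ext k
  rcases eq_or_ne k i with rfl | hk <;> simp [*]

namespace ContinuousLinearMap

variable {𝕜 H : Type*} [RCLike 𝕜] [NormedAddCommGroup H] [InnerProductSpace 𝕜 H] [CompleteSpace H]

theorem inner_apply_apply_eq_zero_of_star_mul_eq_zero {S T : H →L[𝕜] H} (h : star S * T = 0)
    (x y : H) : ⟪S x, T y⟫_𝕜 = 0 := by
  rw [← adjoint_inner_right, ← star_eq_adjoint, ← comp_apply, ← mul_def, h, zero_apply,
    inner_zero_right]

theorem card_le_finrank_of_range_sum_le {ι : Type*} [Fintype ι] {T : ι → H →L[𝕜] H}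
    (hT : ∀ i, T i ≠ 0) (hstar_mul : Pairwise fun i j ↦ star (T i) * T j = 0)
    (hmul_star : Pairwise fun i j ↦ T i * star (T j) = 0) {V : Submodule 𝕜 H}
    [FiniteDimensional 𝕜 V] (hV : LinearMap.range ((∑ i, T i : H →L[𝕜] H) : H →ₗ[𝕜] H) ≤ V) :
    Fintype.card ι ≤ Module.finrank 𝕜 V := by
  have hw : ∀ i, ∃ w, (T i * star (T i)) w ≠ 0 := fun i ↦ by
    by_contra! h
    exact (CStarRing.mul_star_self_ne_zero_iff _).2 (hT i) (ext h)
  choose w hw using hw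
  set u := fun i ↦ (T i * star (T i)) (w i)
  have hu_mem : ∀ i, u i ∈ V := fun i ↦ by
    refine hV ⟨star (T i) (w i), ?_⟩
    rw [coe_coe, sum_apply, Finset.sum_eq_single i (fun j _ hji ↦ by
      rw [← comp_apply, ← mul_def, hmul_star hji, zero_apply]) (by simp)]
    rfl
  have hu_orth : Pairwise fun i j ↦ ⟪u i, u j⟫_𝕜 = 0 := fun i j hij ↦
    inner_apply_apply_eq_zero_of_star_mul_eq_zero (hstar_mul hij) _ _
  have hu_li := linearIndependent_of_ne_zero_of_inner_eq_zero hw hu_orth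
  calc Fintype.card ι = Module.finrank 𝕜 (Submodule.span 𝕜 (Set.range u)) :=
        (finrank_span_eq_card hu_li).symm
    _ ≤ Module.finrank 𝕜 V :=
        Submodule.finrank_mono (Submodule.span_le.2 (Set.range_subset_iff.2 hu_mem))

end ContinuousLinearMap

theorem stmt4_general
    {I : Type*} [DecidableEq I] (A : I → Type*)
    [∀ i, NonUnitalRing (A i)] [∀ i, Module ℂ (A i)] [∀ i, StarRing (A i)]
    {H : Type*} [NormedAddCommGroup H] [InnerProductSpace ℂ H] [CompleteSpace H]
    (n : ℕ)
    (F : (∀ i, A i) →⋆ₙₐ[ℂ] (H →L[ℂ] H))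
    (hF : ∀ a : ∀ i, A i, ∃ V : Submodule ℂ H, FiniteDimensional ℂ V ∧
      Module.finrank ℂ V ≤ n ∧ LinearMap.range ((F a) : H →ₗ[ℂ] H) ≤ V) :
    {i : I | ∃ a : A i, F (Pi.single i a) ≠ 0}.Finite ∧
      {i : I | ∃ a : A i, F (Pi.single i a) ≠ 0}.ncard ≤ n := by
  rw [← Set.encard_le_coe_iff_finite_ncard_le]
  refine Set.encard_le_coe_of_forall_finset_card_le fun t ht ↦ ?_
  choose c hc using fun i : t ↦ ht i.2
  have hmul : ∀ i j : t, i ≠ j → ∀ x y, F (Pi.single i x) * F (Pi.single j y) = 0 :=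
    fun i j hij x y ↦ by
      rw [← map_mul, Pi.single_mul_single_of_ne (Subtype.coe_ne_coe.2 hij), map_zero]
  obtain ⟨V, _, hVn, hV⟩ := hF (∑ i : t, Pi.single i (c i))
  rw [map_sum] at hV
  refine le_trans ?_ hVn
  simpa using ContinuousLinearMap.card_le_finrank_of_range_sum_le hc
    (fun i j hij ↦ by dsimp only; rw [← map_star, ← Pi.single_star, hmul i j hij])
    (fun i j hij ↦ by dsimp only; rw [← map_star, ← Pi.single_star, hmul i j hij])
    hV

/-- If `F` is a star-algebra homomorphism from a product of complex star algebras
`Π i, A i` to `B(H)` all of whose values have rank at most `n`, then the set of indices `i` such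
that `F` is nonzero on some element supported at coordinate `i` has at most `n` elements. -/
theorem stmt4
    {I : Type*} [DecidableEq I] (A : I → Type*)
    [∀ i, NonUnitalRing (A i)] [∀ i, Module ℂ (A i)] [∀ i, StarRing (A i)]
    [∀ i, StarModule ℂ (A i)]
    {H : Type*} [NormedAddCommGroup H] [InnerProductSpace ℂ H] [CompleteSpace H]
    (n : ℕ)
    (F : (∀ i, A i) →⋆ₙₐ[ℂ] (H →L[ℂ] H))
    (hF : ∀ a : ∀ i, A i, ∃ V : Submodule ℂ H, FiniteDimensional ℂ V ∧
      Module.finrank ℂ V ≤ n ∧ LinearMap.range ((F a) : H →ₗ[ℂ] H) ≤ V) :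
    {i : I | ∃ a : A i, F (Pi.single i a) ≠ 0}.Finite ∧
      {i : I | ∃ a : A i, F (Pi.single i a) ≠ 0}.ncard ≤ n :=
  stmt4_general A n F hF
end

section
/- Let H be a complex Hilbert space and n a natural number. The set of operators T ∈ B(H) whose range is contained in some subspace of H of dimension at most n is closed in the weak operator topology on B(H). -/
/-!
The range of `T` lies in a subspace of dimension at most `n` iff no `n + 1` vectors have linearly
independent images, and vectors `v₀, …, vₙ` are dependent iff `det ⟪yᵢ, vⱼ⟫ = 0` for every choice
of `y`: testing with `y = v` gives the Gram determinant. For `vⱼ = T xⱼ` these determinants are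
polynomials in the weakly continuous functions `T ↦ ⟪y, T x⟫`, so the set is an intersection of
closed sets.
-/

open scoped InnerProductSpace

theorem not_linearIndependent_iff_forall_det_inner_eq_zero {𝕜 E ι : Type*} [RCLike 𝕜]
    [NormedAddCommGroup E] [InnerProductSpace 𝕜 E] [Fintype ι] [DecidableEq ι] (v : ι → E) :
    ¬ LinearIndependent 𝕜 v ↔ ∀ y : ι → E, (Matrix.of fun i j => ⟪y i, v j⟫_𝕜).det = 0 := by
  constructor
  · intro hv y
    obtain ⟨c, hc, c_ne⟩ := Fintype.not_linearIndependent_iff.1 hv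
    refine Matrix.exists_mulVec_eq_zero_iff.1 ⟨c, fun h => ?_, funext fun i => ?_⟩
    · obtain ⟨i, hi⟩ := c_ne
      exact hi (congrFun h i)
    · have : ⟪y i, ∑ j, c j • v j⟫_𝕜 = 0 := by rw [hc, inner_zero_right]
      simpa [Matrix.mulVec, dotProduct, inner_sum, inner_smul_right, mul_comm] using this
  · intro h hv
    exact Matrix.det_gram_ne_zero_iff_linearIndependent.2 hv (h v)

namespace LinearMap

variable {K V V' : Type*} [DivisionRing K] [AddCommGroup V] [Module K V] [AddCommGroup V']
  [Module K V'] {n : ℕ}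

theorem rank_le_of_forall_not_linearIndependent (f : V →ₗ[K] V')
    (h : ∀ x : Fin (n + 1) → V, ¬ LinearIndependent K (f ∘ x)) : rank f ≤ n := by
  by_contra! hlt
  have hle : ((n + 1 : ℕ) : Cardinal) ≤ rank f := by
    exact_mod_cast Cardinal.natCast_add_one_le_iff.2 hlt
  obtain ⟨s, hs, hli⟩ := le_rank_iff_exists_linearIndependent_finset.1 hle
  let e : Fin (n + 1) ≃ (s : Set V) := (s.equivFin.trans (finCongr hs)).symm
  exact h (fun i => e i) (hli.comp e e.injective)

theorem exists_finrank_le_and_range_le_iff_forall_not_linearIndependent (f : V →ₗ[K] V') :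
    (∃ W : Submodule K V', FiniteDimensional K W ∧ Module.finrank K W ≤ n ∧ range f ≤ W) ↔
      ∀ x : Fin (n + 1) → V, ¬ LinearIndependent K (f ∘ x) := by
  constructor
  · rintro ⟨W, _, hW, hfW⟩ x hli
    have hspan : Submodule.span K (Set.range (f ∘ x)) ≤ W :=
      Submodule.span_le.2 <| Set.range_subset_iff.2 fun i => hfW (mem_range_self f (x i))
    have hle := Submodule.finrank_mono hspan
    rw [finrank_span_eq_card hli, Fintype.card_fin] at hle
    omega
  · intro h
    have hrank := rank_le_of_forall_not_linearIndependent f h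
    have hfin : FiniteDimensional K (range f) :=
      Module.rank_lt_aleph0_iff.1 (hrank.trans_lt Cardinal.natCast_lt_aleph0)
    exact ⟨range f, hfin, Module.finrank_le_of_rank_le hrank, le_rfl⟩

end LinearMap

namespace ContinuousLinearMapWOT

theorem isClosed_setOf_forall_not_linearIndependent {𝕜 E F : Type*} [RCLike 𝕜]
    [AddCommGroup E] [TopologicalSpace E] [Module 𝕜 E]
    [NormedAddCommGroup F] [InnerProductSpace 𝕜 F] (n : ℕ) :
    IsClosed {T : E →WOT[𝕜] F | ∀ x : Fin (n + 1) → E, ¬ LinearIndependent 𝕜 (T ∘ x)} := by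
  simp_rw [not_linearIndependent_iff_forall_det_inner_eq_zero, Set.ofPred_forall]
  refine isClosed_iInter fun x => isClosed_iInter fun y => isClosed_eq ?_ continuous_const
  exact (continuous_matrix fun i j => continuous_dual_apply (x j) (innerSL 𝕜 (y i))).matrix_det

end ContinuousLinearMapWOT

theorem stmt5_general
    {H : Type*} [NormedAddCommGroup H] [InnerProductSpace ℂ H] (n : ℕ) :
    IsClosed {T : H →WOT[ℂ] H | ∃ V : Submodule ℂ H, FiniteDimensional ℂ V ∧
      Module.finrank ℂ V ≤ n ∧
      LinearMap.range ((ContinuousLinearMapWOT.toCLM T) : H →ₗ[ℂ] H) ≤ V} := by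
  simp_rw [LinearMap.exists_finrank_le_and_range_le_iff_forall_not_linearIndependent]
  exact ContinuousLinearMapWOT.isClosed_setOf_forall_not_linearIndependent n

/-- The set of operators on a complex Hilbert space `H` whose range is contained
in some subspace of dimension at most `n` is closed in the weak operator topology. -/
theorem stmt5
    {H : Type*} [NormedAddCommGroup H] [InnerProductSpace ℂ H] [CompleteSpace H] (n : ℕ) :
    IsClosed {T : H →WOT[ℂ] H | ∃ V : Submodule ℂ H, FiniteDimensional ℂ V ∧
      Module.finrank ℂ V ≤ n ∧
      LinearMap.range ((ContinuousLinearMapWOT.toCLM T) : H →ₗ[ℂ] H) ≤ V} :=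
  stmt5_general n
end
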